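/- arXiv:math/0411637 — 2 statements merged into one kernel-verified Lean document; each statement's English description precedes it below -/
import Mathlib

section
/- Let 𝕂 = ℝ or ℂ and n ≥ 2, and let X^1, …, X^n, Y be 𝕂-analytic functions of (x,y) ∈ 𝕂^n × 𝕂 near the origin with nonvanishing Jacobian determinant Δ. Then for all indices j1, j2, j3, k1 ∈ {1, 2, …, n+1}, the square functions satisfy the cross-differentiation relations ∂(□_{x^{j1}x^{j2}}^{k1})/∂x^{j3} − ∂(□_{x^{j1}x^{j3}}^{k1})/∂x^{j2} = − Σ_{k2=1}^{n+1} □_{x^{j1}x^{j2}}^{k2} □_{x^{j3}x^{k2}}^{k1} + Σ_{k2=1}^{n+1} □_{x^{j1}x^{j3}}^{k2} □_{x^{j2}x^{k2}}^{k1} (with the convention x^{n+1} ≡ y). -/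
/-!
By Cramer's rule the column of square functions □_{ab} solves `J □_{ab} = ∂_a∂_b Z`, where `J` is
the Jacobian of `Z = (X¹, …, Xⁿ, Y)`. Differentiating in `x^c` and expanding the derivatives of
`J` by Cramer's rule once more gives `∂_c∂_a∂_b Z = J (∂_c □_{ab} + Σ_m □^m_{ab} □_{cm})`. The left
side is symmetric in `b, c` (third derivatives of analytic functions commute) and `J` is
invertible, so the vectors in parentheses for `(b, c)` and `(c, b)` coincide.
-/

noncomputable section
open scoped BigOperators

/-- Points (x, y) ∈ 𝕂ⁿ × 𝕂. -/
abbrev Pt (𝕂 : Type) (n : ℕ) := (Fin n → 𝕂) × 𝕂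

variable {𝕂 : Type} [RCLike 𝕂] {n : ℕ}

/-- Direction for differentiation w.r.t. x^k, k ∈ Fin (n+1), convention x^{n+1} ≡ y. -/
def dirv (𝕂 : Type) [RCLike 𝕂] (n : ℕ) (k : Fin (n+1)) : Pt 𝕂 n :=
  if h : (k : ℕ) < n then (Pi.single (⟨k, h⟩ : Fin n) 1, 0) else (0, 1)

/-- ∂f/∂x^k, k ∈ Fin (n+1), with x^{n+1} ≡ y. -/
def pd1 (f : Pt 𝕂 n → 𝕂) (k : Fin (n+1)) (z : Pt 𝕂 n) : 𝕂 := fderiv 𝕂 f z (dirv 𝕂 n k)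

/-- ∂²f/∂x^{j1}∂x^{j2}. -/
def pd2 (f : Pt 𝕂 n → 𝕂) (j1 j2 : Fin (n+1)) (z : Pt 𝕂 n) : 𝕂 :=
  pd1 (fun w => pd1 f j1 w) j2 z

/-- The combined family X¹, …, Xⁿ, X^{n+1} := Y. -/
def ZZ (Xf : Fin n → Pt 𝕂 n → 𝕂) (Yf : Pt 𝕂 n → 𝕂) : Fin (n+1) → Pt 𝕂 n → 𝕂 :=
  Fin.snoc Xf Yf

/-- The Jacobian matrix (∂Xⁱ/∂x^k)_{1 ≤ i,k ≤ n+1}. -/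
def jac (Xf : Fin n → Pt 𝕂 n → 𝕂) (Yf : Pt 𝕂 n → 𝕂) (z : Pt 𝕂 n) :
    Matrix (Fin (n+1)) (Fin (n+1)) 𝕂 :=
  Matrix.of fun i k => pd1 (ZZ Xf Yf i) k z

/-- The Jacobian determinant Δ. -/
def Δdet (Xf : Fin n → Pt 𝕂 n → 𝕂) (Yf : Pt 𝕂 n → 𝕂) (z : Pt 𝕂 n) : 𝕂 :=
  (jac Xf Yf z).det

/-- The modified Jacobian: column k1 is replaced by the second-order derivatives
∂²Xⁱ/∂x^{j1}∂x^{j2}. -/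
def jacMod (Xf : Fin n → Pt 𝕂 n → 𝕂) (Yf : Pt 𝕂 n → 𝕂) (j1 j2 k1 : Fin (n+1))
    (z : Pt 𝕂 n) : Matrix (Fin (n+1)) (Fin (n+1)) 𝕂 :=
  Matrix.of fun i k => if k = k1 then pd2 (ZZ Xf Yf i) j1 j2 z else pd1 (ZZ Xf Yf i) k z

/-- The square function □_{x^{j1}x^{j2}}^{k1} := Δ_{k1}[j1,j2]/Δ. -/
def sqf (Xf : Fin n → Pt 𝕂 n → 𝕂) (Yf : Pt 𝕂 n → 𝕂) (j1 j2 k1 : Fin (n+1))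
    (z : Pt 𝕂 n) : 𝕂 :=
  (jacMod Xf Yf j1 j2 k1 z).det / Δdet Xf Yf z

section General

variable {𝕜 : Type*} [NontriviallyNormedField 𝕜] {E F : Type*}
  [NormedAddCommGroup E] [NormedSpace 𝕜 E] [NormedAddCommGroup F] [NormedSpace 𝕜 F]

theorem AnalyticAt.fderiv_fderiv_apply_comm [CompleteSpace F] {f : E → F} {z : E}
    (hf : AnalyticAt 𝕜 f z) (u v : E) :
    fderiv 𝕜 (fun w => fderiv 𝕜 f w u) z v = fderiv 𝕜 (fun w => fderiv 𝕜 f w v) z u := by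
  have hd : DifferentiableAt 𝕜 (fderiv 𝕜 f) z := hf.fderiv.differentiableAt
  rw [fderiv_clm_apply hd (differentiableAt_const u), fderiv_clm_apply hd (differentiableAt_const v)]
  simpa using (hf.contDiffAt.isSymmSndFDerivAt_of_omega (f := f)) v u

theorem analyticAt_det {m : Type*} [Fintype m] [DecidableEq m]
    {M : E → Matrix m m 𝕜} {z : E} (h : ∀ i j, AnalyticAt 𝕜 (fun w => M w i j) z) :
    AnalyticAt 𝕜 (fun w => (M w).det) z := by
  simp only [Matrix.det_apply']
  exact Finset.analyticAt_fun_sum _ fun σ _ =>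
    analyticAt_const.mul (Finset.analyticAt_fun_prod _ fun i _ => h (σ i) i)

end General

open scoped Matrix

theorem Matrix.mulVec_det_updateCol_div_det {m K : Type*} [Fintype m] [DecidableEq m] [Field K]
    {A : Matrix m m K} (hA : A.det ≠ 0) (b : m → K) :
    A *ᵥ (fun k => (A.updateCol k b).det / A.det) = b := by
  have : (fun k => (A.updateCol k b).det / A.det) = A.det⁻¹ • A.cramer b := by
    ext k; simp [cramer_apply, div_eq_inv_mul]
  rw [this, mulVec_smul, mulVec_cramer, smul_smul, inv_mul_cancel₀ hA, one_smul]

section PartialDerivatives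

theorem AnalyticOnNhd.pd1 {f : Pt 𝕂 n → 𝕂} {W : Set (Pt 𝕂 n)} (hf : AnalyticOnNhd 𝕂 f W)
    (k : Fin (n+1)) : AnalyticOnNhd 𝕂 (pd1 f k) W := fun z hz =>
  ((ContinuousLinearMap.apply 𝕂 𝕂 (dirv 𝕂 n k)).analyticAt _).comp (hf.fderiv z hz)

theorem Filter.EventuallyEq.pd1_eq {f g : Pt 𝕂 n → 𝕂} {z : Pt 𝕂 n} (h : f =ᶠ[nhds z] g)
    (k : Fin (n+1)) : pd1 f k z = pd1 g k z := by
  rw [pd1, h.fderiv_eq, pd1]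

theorem pd1_sum {ι : Type*} (s : Finset ι) {f : ι → Pt 𝕂 n → 𝕂} {z : Pt 𝕂 n}
    (h : ∀ i ∈ s, DifferentiableAt 𝕂 (f i) z) (k : Fin (n+1)) :
    pd1 (fun w => ∑ i ∈ s, f i w) k z = ∑ i ∈ s, pd1 (f i) k z := by
  simp only [pd1, fderiv_fun_sum h, sum_apply]

theorem pd1_mul {f g : Pt 𝕂 n → 𝕂} {z : Pt 𝕂 n}
    (hf : DifferentiableAt 𝕂 f z) (hg : DifferentiableAt 𝕂 g z) (k : Fin (n+1)) :
    pd1 (fun w => f w * g w) k z = pd1 f k z * g z + f z * pd1 g k z := by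
  simp only [pd1, fderiv_fun_mul hf hg, add_apply, smul_apply, smul_eq_mul]
  ring

theorem pd2_comm {f : Pt 𝕂 n → 𝕂} {z : Pt 𝕂 n} (hf : AnalyticAt 𝕂 f z) (a b : Fin (n+1)) :
    pd2 f a b z = pd2 f b a z :=
  hf.fderiv_fderiv_apply_comm _ _

end PartialDerivatives

section SquareFunctions

variable {Xf : Fin n → Pt 𝕂 n → 𝕂} {Yf : Pt 𝕂 n → 𝕂} {W : Set (Pt 𝕂 n)}

theorem analyticOnNhd_ZZ (hX : ∀ l, AnalyticOnNhd 𝕂 (Xf l) W) (hY : AnalyticOnNhd 𝕂 Yf W)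
    (i : Fin (n+1)) : AnalyticOnNhd 𝕂 (ZZ Xf Yf i) W := by
  induction i using Fin.lastCases with
  | last => simpa [ZZ] using hY
  | cast l => simpa [ZZ] using hX l

theorem jacMod_eq_updateCol (a b k : Fin (n+1)) (z : Pt 𝕂 n) :
    jacMod Xf Yf a b k z = (jac Xf Yf z).updateCol k fun i => pd2 (ZZ Xf Yf i) a b z := by
  ext i j
  simp [jacMod, jac, Matrix.updateCol_apply]

theorem jac_mulVec_sqf {z : Pt 𝕂 n} (hΔ : Δdet Xf Yf z ≠ 0) (a b : Fin (n+1)) :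
    jac Xf Yf z *ᵥ (fun k => sqf Xf Yf a b k z) = fun i => pd2 (ZZ Xf Yf i) a b z := by
  simp only [sqf, jacMod_eq_updateCol]
  exact Matrix.mulVec_det_updateCol_div_det hΔ _

variable (hZ : ∀ i, AnalyticOnNhd 𝕂 (ZZ Xf Yf i) W) (hΔ : ∀ z ∈ W, Δdet Xf Yf z ≠ 0)
include hZ

theorem analyticOnNhd_Δdet : AnalyticOnNhd 𝕂 (Δdet Xf Yf) W := fun z hz =>
  analyticAt_det fun i k => (hZ i).pd1 k z hz

include hΔ in
theorem analyticOnNhd_sqf (a b k : Fin (n+1)) : AnalyticOnNhd 𝕂 (sqf Xf Yf a b k) W := by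
  intro z hz
  refine AnalyticAt.div (analyticAt_det fun i j => ?_) (analyticOnNhd_Δdet hZ z hz) (hΔ z hz)
  simp only [jacMod, Matrix.of_apply]
  split_ifs
  · exact ((hZ i).pd1 a).pd1 b z hz
  · exact (hZ i).pd1 j z hz

include hΔ in
-- Differentiate Cramer's rule in `x^c`, then expand `∂_c ∂_k Z` by Cramer's rule again.
theorem pd1_pd2_ZZ_eq_jac_mulVec (hW : IsOpen W) {z : Pt 𝕂 n} (hz : z ∈ W) (a b c : Fin (n+1)) :
    (fun i => pd1 (pd2 (ZZ Xf Yf i) a b) c z) = jac Xf Yf z *ᵥ fun k =>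
      pd1 (sqf Xf Yf a b k) c z + ∑ m, sqf Xf Yf a b m z * sqf Xf Yf c m k z := by
  ext i
  have hcramer : (fun w => ∑ k, pd1 (ZZ Xf Yf i) k w * sqf Xf Yf a b k w)
      =ᶠ[nhds z] pd2 (ZZ Xf Yf i) a b := by
    filter_upwards [hW.mem_nhds hz] with w hw
    exact congrFun (jac_mulVec_sqf (hΔ w hw) a b) i
  have hJ (k : Fin (n+1)) := ((hZ i).pd1 k z hz).differentiableAt
  have hS (k : Fin (n+1)) := (analyticOnNhd_sqf hZ hΔ a b k z hz).differentiableAt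
  have hsecond (k : Fin (n+1)) :
      pd2 (ZZ Xf Yf i) k c z = ∑ m, pd1 (ZZ Xf Yf i) m z * sqf Xf Yf c k m z := by
    rw [pd2_comm ((hZ i) z hz)]
    exact (congrFun (jac_mulVec_sqf (hΔ z hz) c k) i).symm
  rw [← hcramer.pd1_eq, pd1_sum (f := fun k w => pd1 (ZZ Xf Yf i) k w * sqf Xf Yf a b k w) _
    (fun k _ => (hJ k).mul (hS k))]
  simp only [pd1_mul (hJ _) (hS _)]
  change ∑ k, (pd2 (ZZ Xf Yf i) k c z * _ + _) = _
  simp only [hsecond, Matrix.mulVec, dotProduct, jac, Matrix.of_apply, mul_add,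
    Finset.sum_add_distrib, Finset.mul_sum, Finset.sum_mul]
  rw [add_comm, Finset.sum_comm]
  congr 1
  exact Finset.sum_congr rfl fun _ _ => Finset.sum_congr rfl fun _ _ => by ring

end SquareFunctions

theorem square_functions_cross_differentiation_general
    {𝕂 : Type} [RCLike 𝕂] {n : ℕ}
    (W : Set (Pt 𝕂 n)) (hW : IsOpen W)
    (Xf : Fin n → Pt 𝕂 n → 𝕂) (Yf : Pt 𝕂 n → 𝕂)
    (hX : ∀ l, AnalyticOnNhd 𝕂 (Xf l) W) (hY : AnalyticOnNhd 𝕂 Yf W)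
    (hΔ : ∀ z ∈ W, Δdet Xf Yf z ≠ 0) :
    ∀ z ∈ W, ∀ j1 j2 j3 k1 : Fin (n+1),
      pd1 (sqf Xf Yf j1 j2 k1) j3 z - pd1 (sqf Xf Yf j1 j3 k1) j2 z
        = - (∑ k2, sqf Xf Yf j1 j2 k2 z * sqf Xf Yf j3 k2 k1 z)
          + ∑ k2, sqf Xf Yf j1 j3 k2 z * sqf Xf Yf j2 k2 k1 z := by
  intro z hz j1 j2 j3 k1
  have hZ := analyticOnNhd_ZZ hX hY
  have hthird : (fun i => pd1 (pd2 (ZZ Xf Yf i) j1 j2) j3 z)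
      = fun i => pd1 (pd2 (ZZ Xf Yf i) j1 j3) j2 z :=
    funext fun i => pd2_comm ((hZ i).pd1 j1 z hz) j2 j3
  rw [pd1_pd2_ZZ_eq_jac_mulVec hZ hΔ hW hz, pd1_pd2_ZZ_eq_jac_mulVec hZ hΔ hW hz] at hthird
  have hinj := Matrix.mulVec_injective_iff_isUnit.2
    ((Matrix.isUnit_iff_isUnit_det _).2 (hΔ z hz).isUnit)
  linear_combination congrFun (hinj hthird) k1

/-- The square functions of analytic X¹, …, Xⁿ, Y with nonvanishing
Jacobian determinant satisfy the cross-differentiation relations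
`(□_{x^{j1}x^{j2}}^{k1})_{x^{j3}} − (□_{x^{j1}x^{j3}}^{k1})_{x^{j2}}
  = −Σ_{k2} □_{x^{j1}x^{j2}}^{k2} □_{x^{j3}x^{k2}}^{k1}
    + Σ_{k2} □_{x^{j1}x^{j3}}^{k2} □_{x^{j2}x^{k2}}^{k1}`. -/
theorem square_functions_cross_differentiation
    {𝕂 : Type} [RCLike 𝕂] {n : ℕ} (hn : 2 ≤ n)
    (W : Set (Pt 𝕂 n)) (hW : IsOpen W) (hW0 : (0 : Pt 𝕂 n) ∈ W)
    (Xf : Fin n → Pt 𝕂 n → 𝕂) (Yf : Pt 𝕂 n → 𝕂)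
    (hX : ∀ l, AnalyticOnNhd 𝕂 (Xf l) W) (hY : AnalyticOnNhd 𝕂 Yf W)
    (hΔ : ∀ z ∈ W, Δdet Xf Yf z ≠ 0) :
    ∀ z ∈ W, ∀ j1 j2 j3 k1 : Fin (n+1),
      pd1 (sqf Xf Yf j1 j2 k1) j3 z - pd1 (sqf Xf Yf j1 j3 k1) j2 z
        = - (∑ k2, sqf Xf Yf j1 j2 k2 z * sqf Xf Yf j3 k2 k1 z)
          + ∑ k2, sqf Xf Yf j1 j3 k2 z * sqf Xf Yf j2 k2 k1 z :=
  square_functions_cross_differentiation_general W hW Xf Yf hX hY hΔ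
end
end

section
/- Let 𝕂 = ℝ or ℂ and n ≥ 2. Let G_{j1,j2}, H_{j1,j2}^{k1}, L_{j1}^{k1}, M^{k1} (1 ≤ j1, j2, k1 ≤ n) and Θ^{1}, …, Θ^{n+1} be 𝕂-analytic functions of (x,y) ∈ 𝕂^n × 𝕂 near the origin, with G_{j1,j2} = G_{j2,j1} and H_{j1,j2}^{k1} = H_{j2,j1}^{k1}. Define Π_{j1,j2}^{k1} (1 ≤ j1, j2, k1 ≤ n+1, symmetric in the lower indices) by: Π_{j1,j2}^{k1} := H_{j1,j2}^{k1} − ½ δ_{j1}^{k1} H_{j2,j2}^{j2} − ½ δ_{j2}^{k1} H_{j1,j1}^{j1} + ½ δ_{j1}^{k1} Θ^{j2} + ½ δ_{j2}^{k1} Θ^{j1}; Π_{j1,n+1}^{k1} := ½ L_{j1}^{k1} + ½ δ_{j1}^{k1} Θ^{n+1}; Π_{n+1,n+1}^{k1} := M^{k1}; Π_{j1,j2}^{n+1} := −G_{j1,j2}; Π_{j1,n+1}^{n+1} := −½ H_{j1,j1}^{j1} + ½ Θ^{j1}; Π_{n+1,n+1}^{n+1} := Θ^{n+1} (1 ≤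 j1, j2, k1 ≤ n). Then the family of compatibility equations ∂Π_{j1,j2}^{n+1}/∂x^{j3} − ∂Π_{j1,j3}^{n+1}/∂x^{j2} = − Σ_{k2=1}^{n} Π_{j1,j2}^{k2} Π_{j3,k2}^{n+1} − Π_{j1,j2}^{n+1} Π_{j3,n+1}^{n+1} + Σ_{k2=1}^{n} Π_{j1,j3}^{k2} Π_{j2,k2}^{n+1} + Π_{j1,j3}^{n+1} Π_{j2,n+1}^{n+1} (for all 1 ≤ j1, j2, j3 ≤ n) holds at a point if and only if, at that point, 0 = ∂G_{j1,j2}/∂x^{j3} − ∂G_{j1,j3}/∂x^{j2} + Σ_{k=1}^n G_{j3,k} H_{j1,j2}^{k} − Σ_{k=1}^n G_{j2,k} H_{j1,j3}^{k} for all 1 ≤ j1, j2, j3 ≤ n; in particular all occurrences of Θ^{1}, …, Θ^{n+1} cancel and this family of equations is independent of Θ. -/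
noncomputable section
open scoped BigOperators

variable {𝕂 : Type} [RCLike 𝕂] {n : ℕ}

/-- ∂f/∂xʲ for a function of (x, y). -/
def px (f : Pt 𝕂 n → 𝕂) (j : Fin n) (z : Pt 𝕂 n) : 𝕂 := fderiv 𝕂 f z (Pi.single j 1, 0)

/-- ∂f/∂y for a function of (x, y). -/
def py (f : Pt 𝕂 n → 𝕂) (z : Pt 𝕂 n) : 𝕂 := fderiv 𝕂 f z (0, 1)

/-- Kronecker delta. -/
def kd (K : Type) [Zero K] [One K] {m : ℕ} (a b : Fin m) : K := if a = b then 1 else 0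


private lemma kd_sum_aux {𝕂 : Type} [RCLike 𝕂] {n : ℕ} (a : Fin n) (f : Fin n → 𝕂) :
    ∑ k, kd 𝕂 a k * f k = f a := by
  simp [kd, ite_mul]

/-- For the functions Π built from G, H, L, M and the principal unknowns
Θ, the first family of compatibility equations of the first auxiliary system holds at a
point iff equation (I′) holds there; in particular it is independent of Θ. -/
theorem first_compatibility_family_iff_system_I
    {𝕂 : Type} [RCLike 𝕂] {n : ℕ} (hn : 2 ≤ n)
    (W : Set (Pt 𝕂 n)) (hW : IsOpen W) (hW0 : (0 : Pt 𝕂 n) ∈ W)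
    (G : Fin n → Fin n → Pt 𝕂 n → 𝕂) (H : Fin n → Fin n → Fin n → Pt 𝕂 n → 𝕂)
    (L : Fin n → Fin n → Pt 𝕂 n → 𝕂) (M : Fin n → Pt 𝕂 n → 𝕂)
    (Θ : Fin (n+1) → Pt 𝕂 n → 𝕂)
    (hG : ∀ j1 j2, AnalyticOnNhd 𝕂 (G j1 j2) W)
    (hH : ∀ j1 j2 k1, AnalyticOnNhd 𝕂 (H j1 j2 k1) W)
    (hL : ∀ j1 k1, AnalyticOnNhd 𝕂 (L j1 k1) W)
    (hM : ∀ k1, AnalyticOnNhd 𝕂 (M k1) W)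
    (hΘ : ∀ j, AnalyticOnNhd 𝕂 (Θ j) W)
    (hGsym : ∀ j1 j2, G j1 j2 = G j2 j1)
    (hHsym : ∀ j1 j2 k1, H j1 j2 k1 = H j2 j1 k1)
    (Pii : Fin (n+1) → Fin (n+1) → Fin (n+1) → Pt 𝕂 n → 𝕂)
    (hPsym : ∀ j1 j2 k1, Pii j1 j2 k1 = Pii j2 j1 k1)
    (hP1 : ∀ j1 j2 k1 : Fin n, ∀ z,
      Pii j1.castSucc j2.castSucc k1.castSucc z
        = H j1 j2 k1 z - (1/2 : 𝕂) * kd 𝕂 j1 k1 * H j2 j2 j2 z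
          - (1/2 : 𝕂) * kd 𝕂 j2 k1 * H j1 j1 j1 z
          + (1/2 : 𝕂) * kd 𝕂 j1 k1 * Θ j2.castSucc z
          + (1/2 : 𝕂) * kd 𝕂 j2 k1 * Θ j1.castSucc z)
    (hP2 : ∀ j1 k1 : Fin n, ∀ z,
      Pii j1.castSucc (Fin.last n) k1.castSucc z
        = (1/2 : 𝕂) * L j1 k1 z + (1/2 : 𝕂) * kd 𝕂 j1 k1 * Θ (Fin.last n) z)
    (hP3 : ∀ k1 : Fin n, ∀ z, Pii (Fin.last n) (Fin.last n) k1.castSucc z = M k1 z)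
    (hP4 : ∀ j1 j2 : Fin n, ∀ z, Pii j1.castSucc j2.castSucc (Fin.last n) z = - G j1 j2 z)
    (hP5 : ∀ j1 : Fin n, ∀ z,
      Pii j1.castSucc (Fin.last n) (Fin.last n) z
        = -(1/2 : 𝕂) * H j1 j1 j1 z + (1/2 : 𝕂) * Θ j1.castSucc z)
    (hP6 : ∀ z, Pii (Fin.last n) (Fin.last n) (Fin.last n) z = Θ (Fin.last n) z) :
    ∀ z ∈ W,
      (∀ j1 j2 j3 : Fin n,
          px (Pii j1.castSucc j2.castSucc (Fin.last n)) j3 z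
            - px (Pii j1.castSucc j3.castSucc (Fin.last n)) j2 z
          = - (∑ k2 : Fin n,
                Pii j1.castSucc j2.castSucc k2.castSucc z
                  * Pii j3.castSucc k2.castSucc (Fin.last n) z)
            - Pii j1.castSucc j2.castSucc (Fin.last n) z
                * Pii j3.castSucc (Fin.last n) (Fin.last n) z
            + (∑ k2 : Fin n,
                Pii j1.castSucc j3.castSucc k2.castSucc z
                  * Pii j2.castSucc k2.castSucc (Fin.last n) z)
            + Pii j1.castSucc j3.castSucc (Fin.last n) z
                * Pii j2.castSucc (Fin.last n) (Fin.last n) z) ↔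
      (∀ j1 j2 j3 : Fin n,
          0 = px (G j1 j2) j3 z - px (G j1 j3) j2 z
            + (∑ k, G j3 k z * H j1 j2 k z) - ∑ k, G j2 k z * H j1 j3 k z) := by
  intro z hz
  have hpx : ∀ a b : Fin n, ∀ j : Fin n,
      px (Pii a.castSucc b.castSucc (Fin.last n)) j z = - px (G a b) j z := by
    intro a b j
    have : Pii a.castSucc b.castSucc (Fin.last n) = fun w => -(G a b w) :=
      funext fun w => hP4 a b w
    rw [this]
    simp [px, fderiv_neg]
  have key : ∀ a b c : Fin n,
      (∑ k : Fin n, Pii a.castSucc b.castSucc k.castSucc z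
          * Pii c.castSucc k.castSucc (Fin.last n) z)
        = -(∑ k, G c k z * H a b k z)
          + (1/2 : 𝕂) * G c a z * H b b b z + (1/2 : 𝕂) * G c b z * H a a a z
          - (1/2 : 𝕂) * G c a z * Θ b.castSucc z
          - (1/2 : 𝕂) * G c b z * Θ a.castSucc z := by
    intro a b c
    have step : ∀ k : Fin n,
        Pii a.castSucc b.castSucc k.castSucc z * Pii c.castSucc k.castSucc (Fin.last n) z
          = -(G c k z * H a b k z)
            + kd 𝕂 a k * ((1/2 : 𝕂) * H b b b z * G c k z)
            + kd 𝕂 b k * ((1/2 : 𝕂) * H a a a z * G c k z)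
            + kd 𝕂 a k * (-(1/2 : 𝕂) * Θ b.castSucc z * G c k z)
            + kd 𝕂 b k * (-(1/2 : 𝕂) * Θ a.castSucc z * G c k z) := by
      intro k
      rw [hP1, hP4]
      ring
    calc (∑ k : Fin n, Pii a.castSucc b.castSucc k.castSucc z
            * Pii c.castSucc k.castSucc (Fin.last n) z)
        = ∑ k : Fin n, (-(G c k z * H a b k z)
            + kd 𝕂 a k * ((1/2 : 𝕂) * H b b b z * G c k z)
            + kd 𝕂 b k * ((1/2 : 𝕂) * H a a a z * G c k z)
            + kd 𝕂 a k * (-(1/2 : 𝕂) * Θ b.castSucc z * G c k z)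
            + kd 𝕂 b k * (-(1/2 : 𝕂) * Θ a.castSucc z * G c k z)) :=
          Finset.sum_congr rfl fun k _ => step k
      _ = -(∑ k, G c k z * H a b k z)
            + (1/2 : 𝕂) * G c a z * H b b b z + (1/2 : 𝕂) * G c b z * H a a a z
            - (1/2 : 𝕂) * G c a z * Θ b.castSucc z
            - (1/2 : 𝕂) * G c b z * Θ a.castSucc z := by
          rw [Finset.sum_add_distrib, Finset.sum_add_distrib, Finset.sum_add_distrib,
            Finset.sum_add_distrib, kd_sum_aux, kd_sum_aux, kd_sum_aux, kd_sum_aux,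
            ← Finset.sum_neg_distrib]
          ring
  have main : ∀ j1 j2 j3 : Fin n,
      (px (Pii j1.castSucc j2.castSucc (Fin.last n)) j3 z
            - px (Pii j1.castSucc j3.castSucc (Fin.last n)) j2 z
          = - (∑ k2 : Fin n,
                Pii j1.castSucc j2.castSucc k2.castSucc z
                  * Pii j3.castSucc k2.castSucc (Fin.last n) z)
            - Pii j1.castSucc j2.castSucc (Fin.last n) z
                * Pii j3.castSucc (Fin.last n) (Fin.last n) z
            + (∑ k2 : Fin n,
                Pii j1.castSucc j3.castSucc k2.castSucc z
                  * Pii j2.castSucc k2.castSucc (Fin.last n) z)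
            + Pii j1.castSucc j3.castSucc (Fin.last n) z
                * Pii j2.castSucc (Fin.last n) (Fin.last n) z) ↔
      (0 = px (G j1 j2) j3 z - px (G j1 j3) j2 z
            + (∑ k, G j3 k z * H j1 j2 k z) - ∑ k, G j2 k z * H j1 j3 k z) := by
    intro j1 j2 j3
    have g1 : G j3 j1 z = G j1 j3 z := congrFun (hGsym j3 j1) z
    have g2 : G j3 j2 z = G j2 j3 z := congrFun (hGsym j3 j2) z
    have g3 : G j2 j1 z = G j1 j2 z := congrFun (hGsym j2 j1) z
    rw [hpx, hpx, key, key, hP4, hP4, hP5, hP5, g1, g2, g3]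
    constructor <;> intro hh <;> linear_combination hh
  exact ⟨fun h j1 j2 j3 => (main j1 j2 j3).mp (h j1 j2 j3),
         fun h j1 j2 j3 => (main j1 j2 j3).mpr (h j1 j2 j3)⟩
end
end
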